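/- arXiv:cs/0509006 — 3 statements merged into one kernel-verified Lean document; each statement's English description precedes it below -/
import Mathlib

section
/- The element ζ₁₆ = e^{iπ/8} is not the norm of any element of K = ℚ(ζ₁₆, √5) relative to the extension K/ℚ(ζ₁₆). -/
open IntermediateField

noncomputable def zeta16 : ℂ := Complex.exp (Complex.I * Real.pi / 8)

noncomputable def F16 : IntermediateField ℚ ℂ := ℚ⟮zeta16⟯

noncomputable def K16 : IntermediateField (↥F16) ℂ :=
  IntermediateField.adjoin (↥F16) {((Real.sqrt 5 : ℝ) : ℂ)}

open Polynomial

set_option maxHeartbeats 1000000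
set_option synthInstance.maxHeartbeats 400000

lemma zeta16_prim : IsPrimitiveRoot zeta16 16 := by
  have h := Complex.isPrimitiveRoot_exp 16 (by norm_num)
  have : Complex.exp (2 * ↑Real.pi * Complex.I / (16:ℕ)) = zeta16 := by
    unfold zeta16; congr 1; push_cast; ring
  rwa [this] at h

lemma cyclo16 : cyclotomic 16 ℚ = X ^ 8 + 1 := by
  have := Polynomial.cyclotomic_prime_pow_eq_geom_sum (R := ℚ) (p := 2) (n := 3) Nat.prime_two
  norm_num [Finset.sum_range_succ] at this
  rw [this]
  ring

lemma minpoly_zeta16 : minpoly ℚ zeta16 = X ^ 8 + 1 := by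
  rw [← Polynomial.cyclotomic_eq_minpoly_rat zeta16_prim (by norm_num), cyclo16]

instance : Fact (Nat.Prime 5) := ⟨by norm_num⟩

local notation "φ5" => Int.castRingHom (ZMod 5)

noncomputable def fZ : ℤ[X] := X ^ 8 + 1
noncomputable def f5 : (ZMod 5)[X] := X ^ 8 + 1

lemma f5_map : fZ.map φ5 = f5 := by simp [fZ, f5]

lemma f5_monic : f5.Monic := by
  have := Polynomial.monic_X_pow_add_C (R := ZMod 5) (1 : ZMod 5) (n := 8) (by norm_num)
  simpa [f5] using this

lemma f5_ne_zero : f5 ≠ 0 := f5_monic.ne_zero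

lemma f5_natDegree : f5.natDegree = 8 := by
  have : f5 = X ^ 8 + C 1 := by simp [f5]
  rw [this, Polynomial.natDegree_X_pow_add_C]

lemma f5_sep : Separable f5 := by
  refine ⟨1, -(C 2 * X), ?_⟩
  have hd : derivative f5 = C 8 * X ^ 7 := by
    simp [f5]
    rw [← C_1, ← C_add]; norm_num
  have h : (C (2: ZMod 5)) * C 8 = 1 := by
    rw [← C_mul, show ((2:ZMod 5)*8) = 1 from by decide, C_1]
  rw [hd, f5]
  linear_combination (-(X:(ZMod 5)[X])^8) * h

set_option synthInstance.maxHeartbeats 1000000 in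
lemma dvd_of_sq_dvd {a : (ZMod 5)[X]} (h : f5 ∣ a ^ 2) : f5 ∣ a :=
  (f5_sep.squarefree.dvd_pow_iff_dvd (by norm_num)).mp h

/-- if p maps to 0 mod 5, then p = 5 * q -/
lemma eq_five_mul_of_map_zero {p : ℤ[X]} (h : p.map φ5 = 0) : ∃ q : ℤ[X], p = 5 * q := by
  have : (C (5:ℤ)) ∣ p := by
    rw [Polynomial.C_dvd_iff_dvd_coeff]
    intro i
    have := congrArg (fun r => Polynomial.coeff r i) h
    simp [Polynomial.coeff_map] at this
    exact_mod_cast (ZMod.intCast_zmod_eq_zero_iff_dvd _ 5).mp this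
  obtain ⟨q, hq⟩ := this
  exact ⟨q, by rw [← map_ofNat (C : ℤ →+* ℤ[X]) 5]; exact_mod_cast hq⟩

lemma map_lift (a : (ZMod 5)[X]) : ∃ D : ℤ[X], D.map φ5 = a :=
  Polynomial.map_surjective φ5 ZMod.intCast_surjective a

/-- If f5 divides the image of A mod 5, then A = 5*A₁ + fZ*E -/
lemma decomp {A : ℤ[X]} (h : f5 ∣ A.map φ5) : ∃ A₁ E : ℤ[X], A = 5 * A₁ + fZ * E := by
  obtain ⟨e, he⟩ := h
  obtain ⟨E, hE⟩ := map_lift e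
  have h0 : (A - fZ * E).map φ5 = 0 := by
    rw [Polynomial.map_sub, Polynomial.map_mul, f5_map, hE, he, sub_self]
  obtain ⟨A₁, hA₁⟩ := eq_five_mul_of_map_zero h0
  exact ⟨A₁, E, by linear_combination hA₁⟩

abbrev GF := GaloisField 5 4

noncomputable instance : Fintype GF := Fintype.ofFinite _

lemma gf_card : Fintype.card GF = 625 := by
  have h := GaloisField.card 5 4 (by norm_num)
  simpa [Nat.card_eq_fintype_card] using h

lemma gf_one_ne_neg_one : (1 : GF) ≠ -1 := by
  intro h
  have h2 : (2 : GF) = 0 := by linear_combination h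
  have := (CharP.cast_eq_zero_iff GF 5 2).mp h2
  norm_num at this

lemma gf_no_sixteenth (z : GF) : z ^ 16 ≠ -1 := by
  intro h
  have hz : z ≠ 0 := by
    intro h0
    rw [h0] at h
    norm_num at h
  have h624 : z ^ 624 = 1 := by
    have := FiniteField.pow_card_sub_one_eq_one z hz
    rwa [gf_card] at this
  have h32 : z ^ 32 = 1 := by
    have : z ^ 32 = (z ^ 16) ^ 2 := by ring
    rw [this, h, neg_one_sq]
  have hd32 : orderOf z ∣ 32 := orderOf_dvd_of_pow_eq_one h32
  have hd624 : orderOf z ∣ 624 := orderOf_dvd_of_pow_eq_one h624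
  have h16 : orderOf z ∣ 16 := Nat.dvd_gcd hd32 hd624 |>.trans (by norm_num)
  have : z ^ 16 = 1 := orderOf_dvd_iff_pow_eq_one.mp h16
  exact gf_one_ne_neg_one (by linear_combination h - this)

lemma gf_exists_x : ∃ x : GF, x ^ 8 = -1 := by
  obtain ⟨g, hg⟩ := IsCyclic.exists_generator (α := GFˣ)
  have hog : orderOf g = 624 := by
    rw [orderOf_eq_card_of_forall_mem_zpowers hg, Nat.card_units,
      GaloisField.card 5 4 (by norm_num)]
    norm_num
  have hx : orderOf (g ^ 39) = 16 := by
    rw [orderOf_pow, hog]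
    norm_num
  set x : GFˣ := g ^ 39 with hxdef
  have h16 : x ^ 16 = 1 := by
    rw [← hx]; exact pow_orderOf_eq_one x
  have h8 : x ^ 8 ≠ 1 := by
    intro h
    have := orderOf_dvd_of_pow_eq_one h
    rw [hx] at this
    norm_num at this
  refine ⟨(x : GF), ?_⟩
  have hsq : ((x : GF) ^ 8) ^ 2 = 1 := by
    have : (x ^ 16 : GFˣ) = 1 := h16
    have := congrArg (Units.val) this
    push_cast at this
    rw [← this]; ring
  rcases mul_self_eq_one_iff.mp (show ((x:GF)^8) * ((x:GF)^8) = 1 by linear_combination hsq) with h | h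
  · exfalso
    apply h8
    ext
    push_cast
    exact h
  · exact h

lemma five_zero : (5 : (ZMod 5)[X]) = 0 := by
  rw [← map_ofNat (C : ZMod 5 →+* (ZMod 5)[X]) 5, show ((5:ZMod 5)) = 0 from by decide, map_zero]

lemma C5_eq : (C (5:ℤ) : ℤ[X]) = 5 := map_ofNat (C : ℤ →+* ℤ[X]) 5

lemma fZ_mul_eq_five_mul {C₁ R : ℤ[X]} (h : fZ * C₁ = 5 * R) :
    ∃ C₂ : ℤ[X], C₁ = 5 * C₂ ∧ fZ * C₂ = R := by
  have hm : f5 * C₁.map φ5 = 0 := by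
    have := congrArg (Polynomial.map φ5) h
    simpa [Polynomial.map_mul, f5_map, five_zero] using this
  have hC1 : C₁.map φ5 = 0 := by
    rcases mul_eq_zero.mp hm with h' | h'
    · exact absurd h' f5_ne_zero
    · exact h'
  obtain ⟨C₂, hC₂⟩ := eq_five_mul_of_map_zero hC1
  refine ⟨C₂, hC₂, ?_⟩
  have h5 : (5 : ℤ[X]) ≠ 0 := by norm_num
  apply mul_left_cancel₀ h5
  rw [hC₂] at h
  linear_combination h

lemma L2aux : ∀ N : ℕ, ∀ n : ℤ, n.natAbs ≤ N → n ≠ 0 → ∀ A B Cc : ℤ[X],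
    C (n ^ 2) * X = A ^ 2 - 5 * B ^ 2 + fZ * Cc → False := by
  intro N
  induction N using Nat.strong_induction_on with
  | _ N ih =>
  intro n hN hn A B Cc h
  rw [map_pow] at h
  by_cases h5n : (5:ℤ) ∣ n
  · -- descent
    obtain ⟨m, rfl⟩ := h5n
    have hm : m ≠ 0 := by rintro rfl; simp at hn
    rw [map_mul, C5_eq] at h
    -- h : (5 * C m)^2 * X = A^2 - 5B^2 + fZ * Cc
    have hmodA : f5 ∣ (A.map φ5) ^ 2 := by
      refine ⟨-(Cc.map φ5), ?_⟩
      have := congrArg (Polynomial.map φ5) h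
      simp only [Polynomial.map_mul, Polynomial.map_add, Polynomial.map_sub,
        Polynomial.map_pow, Polynomial.map_X, Polynomial.map_ofNat, f5_map, five_zero] at this
      linear_combination -this
    obtain ⟨A₁, E, rfl⟩ := decomp (dvd_of_sq_dvd hmodA)
    have h1 : fZ * (Cc + 10*A₁*E + fZ*E^2) = 5 * (5 * (C m)^2 * X - 5*A₁^2 + B^2) := by
      linear_combination -h
    obtain ⟨C₂, hC₂, h2⟩ := fZ_mul_eq_five_mul h1
    -- h2 : fZ * C₂ = 5 * (C m)^2 * X - 5*A₁^2 + B^2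
    have hmodB : f5 ∣ (B.map φ5) ^ 2 := by
      refine ⟨(C₂.map φ5), ?_⟩
      have := congrArg (Polynomial.map φ5) h2
      simp only [Polynomial.map_mul, Polynomial.map_add, Polynomial.map_sub,
        Polynomial.map_pow, Polynomial.map_X, Polynomial.map_ofNat, f5_map, five_zero] at this
      linear_combination -this
    obtain ⟨B₁, E₂, rfl⟩ := decomp (dvd_of_sq_dvd hmodB)
    have h3 : fZ * (C₂ - 10*B₁*E₂ - fZ*E₂^2) = 5 * ((C m)^2 * X - A₁^2 + 5*B₁^2) := by
      linear_combination h2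
    obtain ⟨C₄, _, h4⟩ := fZ_mul_eq_five_mul h3
    -- h4 : fZ * C₄ = (C m)^2 * X - A₁^2 + 5*B₁^2
    have hfin : C (m ^ 2) * X = A₁ ^ 2 - 5 * B₁ ^ 2 + fZ * C₄ := by
      rw [map_pow]
      linear_combination -h4
    have hlt : m.natAbs ≤ N - 1 := by
      have : (5*m).natAbs = 5 * m.natAbs := by
        norm_num [Int.natAbs_mul]
      omega
    exact ih (N-1) (by omega) m hlt hm A₁ B₁ C₄ hfin
  · -- base case : contradiction in GF
    have hx := gf_exists_x
    obtain ⟨x, hx8⟩ := hx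
    have heval := congrArg (Polynomial.aeval (R := ℤ) x) h
    simp only [map_mul, map_add, map_sub, map_pow, Polynomial.aeval_X, Polynomial.aeval_C,
      map_ofNat, algebraMap_int_eq, eq_intCast, map_intCast] at heval
    have hfZx : Polynomial.aeval (R := ℤ) x fZ = 0 := by
      simp [fZ, hx8]
    rw [hfZx] at heval
    have h5gf : (5 : GF) = 0 := by
      have := CharP.cast_eq_zero GF 5
      exact_mod_cast this
    rw [h5gf] at heval
    -- heval : (algebraMap ℤ GF n)^2 * x = (aeval x A)^2 - 0 * _ + 0 * _
    have hnz : ((n : ℤ) : GF) ≠ 0 := by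
      intro h0
      exact h5n (by exact_mod_cast (CharP.intCast_eq_zero_iff GF 5 n).mp h0)
    set a : GF := Polynomial.aeval (R := ℤ) x A with ha
    have heval2 : ((n:GF))^2 * x = a^2 := by
      linear_combination heval
    set z : GF := a * ((n:GF))⁻¹ with hz
    have hzz : z ^ 2 = x := by
      rw [hz]
      field_simp
      linear_combination -heval2
    apply gf_no_sixteenth z
    calc z ^ 16 = (z^2)^8 := by ring
    _ = x ^ 8 := by rw [hzz]
    _ = -1 := hx8

lemma L2 (n : ℤ) (hn : n ≠ 0) (A B Cc : ℤ[X])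
    (h : C (n ^ 2) * X = A ^ 2 - 5 * B ^ 2 + fZ * Cc) : False :=
  L2aux n.natAbs n le_rfl hn A B Cc h

lemma L1aux : ∀ N : ℕ, ∀ n : ℤ, n.natAbs ≤ N → n ≠ 0 → ∀ A Cc : ℤ[X],
    C (5 * n ^ 2) = A ^ 2 + fZ * Cc → False := by
  intro N
  induction N using Nat.strong_induction_on with
  | _ N ih =>
  intro n hN hn A Cc h
  rw [map_mul, map_pow, C5_eq] at h
  -- h : 5 * C n ^ 2 = A ^ 2 + fZ * Cc
  have hmodA : f5 ∣ (A.map φ5) ^ 2 := by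
    refine ⟨-(Cc.map φ5), ?_⟩
    have := congrArg (Polynomial.map φ5) h
    simp only [Polynomial.map_mul, Polynomial.map_add, Polynomial.map_pow,
      Polynomial.map_ofNat, f5_map, five_zero] at this
    linear_combination -this
  obtain ⟨A₁, E, rfl⟩ := decomp (dvd_of_sq_dvd hmodA)
  have h1 : fZ * (Cc + 10*A₁*E + fZ*E^2) = 5 * (C n ^ 2 - 5*A₁^2) := by
    linear_combination -h
  obtain ⟨C₂, _, h2⟩ := fZ_mul_eq_five_mul h1
  -- h2 : fZ * C₂ = C n ^ 2 - 5 * A₁ ^ 2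
  by_cases h5n : (5:ℤ) ∣ n
  · obtain ⟨m, rfl⟩ := h5n
    have hm : m ≠ 0 := by rintro rfl; simp at hn
    rw [map_mul, C5_eq] at h2
    have h3 : fZ * C₂ = 5 * (5 * C m ^ 2 - A₁ ^ 2) := by linear_combination h2
    obtain ⟨C₃, _, h4⟩ := fZ_mul_eq_five_mul h3
    have hfin : C (5 * m ^ 2) = A₁ ^ 2 + fZ * C₃ := by
      rw [map_mul, map_pow, C5_eq]
      linear_combination -h4
    have hlt : m.natAbs ≤ N - 1 := by
      have : (5*m).natAbs = 5 * m.natAbs := by norm_num [Int.natAbs_mul]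
      omega
    exact ih (N-1) (by omega) m hlt hm A₁ C₃ hfin
  · have hmap := congrArg (Polynomial.map φ5) h2
    simp only [Polynomial.map_mul, Polynomial.map_sub, Polynomial.map_pow,
      Polynomial.map_ofNat, Polynomial.map_C, Int.coe_castRingHom, f5_map, five_zero] at hmap
    -- hmap : f5 * map φ5 C₂ = C ((n : ZMod 5)) ^ 2 - 0 * _
    have hr : ((n:ℤ) : ZMod 5) ≠ 0 := by
      intro h0
      exact h5n (by exact_mod_cast (ZMod.intCast_zmod_eq_zero_iff_dvd n 5).mp h0)
    have hmap2 : f5 * Polynomial.map φ5 C₂ = C (((n:ℤ) : ZMod 5) ^ 2) := by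
      rw [map_pow]
      linear_combination hmap
    have hC2ne : Polynomial.map φ5 C₂ ≠ 0 := by
      intro h0
      have hc : C ((((n:ℤ) : ZMod 5)) ^ 2) = 0 := by rw [← hmap2, h0, mul_zero]
      exact hr (pow_eq_zero_iff (two_ne_zero) |>.mp (Polynomial.C_eq_zero.mp hc))
    have hdeg := congrArg Polynomial.natDegree hmap2
    rw [Polynomial.natDegree_mul f5_ne_zero hC2ne, f5_natDegree, Polynomial.natDegree_C] at hdeg
    omega

lemma L1 (n : ℤ) (hn : n ≠ 0) (A Cc : ℤ[X])
    (h : C (5 * n ^ 2) = A ^ 2 + fZ * Cc) : False :=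
  L1aux n.natAbs n le_rfl hn A Cc h

local notation "φQ" => Int.castRingHom ℚ

lemma zeta16_int : IsIntegral ℚ zeta16 :=
  (zeta16_prim.isIntegral (by norm_num)).tower_top

lemma fZ_monic : fZ.Monic := by
  have := Polynomial.monic_X_pow_add_C (R := ℤ) (1 : ℤ) (n := 8) (by norm_num)
  simpa [fZ] using this

lemma fZ_mapQ : fZ.map φQ = X ^ 8 + 1 := by simp [fZ]

lemma mem_F16 {z : ℂ} (hz : z ∈ F16) : ∃ P : ℚ[X], Polynomial.aeval zeta16 P = z := by
  have h := IntermediateField.adjoin_simple_toSubalgebra_of_isAlgebraic zeta16_int.isAlgebraic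
  have hz' : z ∈ (ℚ⟮zeta16⟯ : IntermediateField ℚ ℂ).toSubalgebra := hz
  rw [h, Algebra.adjoin_singleton_eq_range_aeval] at hz'
  obtain ⟨P, hP⟩ := hz'
  exact ⟨P, hP⟩

lemma exists_denom (P : ℚ[X]) :
    ∃ (n : ℤ) (A : ℤ[X]), n ≠ 0 ∧ A.map φQ = Polynomial.C ((n:ℤ):ℚ) * P := by
  obtain ⟨b, hb⟩ := IsLocalization.integerNormalization_map_to_map (nonZeroDivisors ℤ) P
  refine ⟨(b : ℤ), IsLocalization.integerNormalization (nonZeroDivisors ℤ) P,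
    nonZeroDivisors.coe_ne_zero b, ?_⟩
  rw [show (algebraMap ℤ ℚ) = φQ from rfl] at hb
  rw [hb, zsmul_eq_mul, ← Polynomial.C_eq_intCast]

lemma int_transfer {G : ℤ[X]} (h : (X ^ 8 + 1 : ℚ[X]) ∣ G.map φQ) :
    ∃ Cc : ℤ[X], G = fZ * Cc := by
  have h0 : G %ₘ fZ = 0 := by
    have hinj : Function.Injective (Polynomial.map φQ) :=
      Polynomial.map_injective _ Int.cast_injective
    apply hinj
    rw [Polynomial.map_modByMonic _ fZ_monic, Polynomial.map_zero, fZ_mapQ]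
    exact (Polynomial.modByMonic_eq_zero_iff_dvd (by
      have := fZ_monic.map φQ; rwa [fZ_mapQ] at this)).mpr h
  refine ⟨G /ₘ fZ, ?_⟩
  conv_lhs => rw [← Polynomial.modByMonic_add_div G fZ]
  rw [h0, zero_add]

lemma minpoly_dvd_of_aeval {g : ℚ[X]} (hg : Polynomial.aeval zeta16 g = 0) :
    (X ^ 8 + 1 : ℚ[X]) ∣ g := by
  rw [← minpoly_zeta16]
  exact minpoly.dvd ℚ zeta16 hg

noncomputable def s5 : ℂ := ((Real.sqrt 5 : ℝ) : ℂ)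

lemma s5_sq : s5 ^ 2 = 5 := by
  unfold s5
  norm_cast
  rw [Real.sq_sqrt] <;> norm_num

lemma s5_ne_zero : s5 ≠ 0 := by
  unfold s5
  have : Real.sqrt 5 > 0 := Real.sqrt_pos.mpr (by norm_num)
  exact_mod_cast ne_of_gt (by exact_mod_cast this)

lemma sqrt5_not_mem : s5 ∉ F16 := by
  intro hs
  obtain ⟨P, hP⟩ := mem_F16 hs
  have h0 : Polynomial.aeval zeta16 (P ^ 2 - 5) = 0 := by
    rw [map_sub, map_pow, hP]
    simp [s5_sq, map_ofNat]
  obtain ⟨n, A, hn, hA⟩ := exists_denom P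
  have hdvd2 : (X ^ 8 + 1 : ℚ[X]) ∣ (A ^ 2 - C (5 * n ^ 2)).map φQ := by
    have heq : (A ^ 2 - C (5 * n ^ 2)).map φQ
        = C (((n:ℤ):ℚ)) ^ 2 * (P ^ 2 - 5) := by
      rw [Polynomial.map_sub, Polynomial.map_pow, hA, Polynomial.map_C]
      rw [show (C (φQ (5 * n ^ 2)) : ℚ[X]) = 5 * C (((n:ℤ):ℚ)) ^ 2 from by
        rw [show φQ (5 * n ^ 2) = 5 * ((n:ℤ):ℚ) ^ 2 from by rw [eq_intCast]; push_cast; ring,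
          map_mul, map_pow, map_ofNat]]
      ring
    rw [heq]
    exact Dvd.dvd.mul_left (minpoly_dvd_of_aeval h0) _
  obtain ⟨Cc, hCc⟩ := int_transfer hdvd2
  exact L1 n hn A (-Cc) (by linear_combination -hCc)

/-- ζ₁₆ = e^{iπ/8} is not the norm of any element of K = ℚ(ζ₁₆, √5)
relative to the extension K/ℚ(ζ₁₆). -/
theorem stmt1 :
    ¬ ∃ x : ↥K16,
      Algebra.norm (↥F16) x
        = ⟨zeta16, IntermediateField.mem_adjoin_simple_self ℚ zeta16⟩ := by
  rintro ⟨x, hx⟩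
  have hsint : IsIntegral ↥F16 s5 := by
    refine ⟨X ^ 2 - C (5 : ↥F16), ?_, ?_⟩
    · exact Polynomial.monic_X_pow_sub_C _ (by norm_num)
    · simp only [eval₂_sub, eval₂_pow, eval₂_X, eval₂_C]
      rw [show ((algebraMap ↥F16 ℂ) (5 : ↥F16)) = 5 from map_ofNat _ 5]
      rw [s5_sq]; ring
  have haeval : Polynomial.aeval s5 (X ^ 2 - C (5 : ↥F16)) = 0 := by
    simp only [map_sub, map_pow, Polynomial.aeval_X, Polynomial.aeval_C]
    rw [show ((algebraMap ↥F16 ℂ) (5 : ↥F16)) = 5 from map_ofNat _ 5]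
    rw [s5_sq]; ring
  have hb2 : ∀ b : ↥F16, b ^ 2 ≠ (5 : ↥F16) := by
    intro b hb
    have hbc : ((b : ℂ)) ^ 2 = 5 := by
      have h := congrArg (algebraMap ↥F16 ℂ) hb
      rw [map_pow, map_ofNat, IntermediateField.algebraMap_apply] at h
      exact h
    have : ((b:ℂ) - s5) * ((b:ℂ) + s5) = 0 := by
      linear_combination hbc - s5_sq
    rcases mul_eq_zero.mp this with h | h
    · exact sqrt5_not_mem (by rw [show s5 = (b:ℂ) from by linear_combination -h]; exact b.2)
    · exact sqrt5_not_mem (by rw [show s5 = -(b:ℂ) from by linear_combination h]; exact F16.neg_mem b.2)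
  have hirr : Irreducible (X ^ 2 - C (5 : ↥F16)) :=
    X_pow_sub_C_irreducible_of_prime Nat.prime_two hb2
  have hminp : minpoly ↥F16 s5 = X ^ 2 - C (5 : ↥F16) :=
    (minpoly.eq_of_irreducible_of_monic hirr haeval
      (Polynomial.monic_X_pow_sub_C _ (by norm_num))).symm
  haveI hFD : FiniteDimensional ↥F16 ↥K16 :=
    IntermediateField.adjoin.finiteDimensional hsint
  have hrank : Module.finrank ↥F16 ↥K16 = 2 := by
    rw [show K16 = (↥F16)⟮s5⟯ from rfl, IntermediateField.adjoin.finrank hsint, hminp]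
    exact Polynomial.natDegree_X_pow_sub_C
  -- the two embeddings
  set g16 : ↥K16 := ⟨s5, IntermediateField.mem_adjoin_simple_self ↥F16 s5⟩ with hg16
  set σ₁ : ↥K16 →ₐ[↥F16] ℂ := K16.val with hσ₁def
  have hroot2 : -s5 ∈ (minpoly ↥F16 s5).aroots ℂ := by
    rw [hminp, Polynomial.mem_aroots]
    constructor
    · intro hzero
      have := congrArg Polynomial.natDegree hzero
      rw [Polynomial.natDegree_X_pow_sub_C, Polynomial.natDegree_zero] at this
      norm_num at this
    · simp only [map_sub, map_pow, Polynomial.aeval_X, Polynomial.aeval_C]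
      rw [show ((algebraMap ↥F16 ℂ) (5 : ↥F16)) = 5 from map_ofNat _ 5]
      rw [neg_pow, s5_sq]; ring
  set σ₂ : ↥K16 →ₐ[↥F16] ℂ :=
    (IntermediateField.algHomAdjoinIntegralEquiv ↥F16 hsint).symm ⟨-s5, hroot2⟩ with hσ₂def
  have hgen1 : σ₁ g16 = s5 := rfl
  have hgen2 : σ₂ g16 = -s5 := by
    have h := IntermediateField.algHomAdjoinIntegralEquiv_symm_apply_gen ↥F16 hsint ⟨-s5, hroot2⟩
    exact h
  have hne : σ₁ ≠ σ₂ := by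
    intro hcontra
    rw [hcontra] at hgen1
    rw [hgen1] at hgen2
    exact s5_ne_zero (by linear_combination (hgen2) / 2)
  have hcard : Fintype.card (↥K16 →ₐ[↥F16] ℂ) = 2 := by
    rw [AlgHom.card, hrank]
  haveI : DecidableEq (↥K16 →ₐ[↥F16] ℂ) := Classical.decEq _
  have huniv : (Finset.univ : Finset (↥K16 →ₐ[↥F16] ℂ)) = {σ₁, σ₂} := by
    symm
    apply Finset.eq_univ_of_card
    rw [Finset.card_insert_of_notMem (by simpa using hne), Finset.card_singleton, hcard]
  have hnorm := Algebra.norm_eq_prod_embeddings (K := ↥F16) (L := ↥K16) (E := ℂ) x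
  rw [huniv, Finset.prod_insert (by simpa using hne), Finset.prod_singleton] at hnorm
  rw [hx] at hnorm
  have hζ : zeta16 = σ₁ x * σ₂ x := by
    rw [← hnorm]
    rfl
  -- express x via a polynomial in the generator
  have hxmem : (x : ℂ) ∈ IntermediateField.adjoin ↥F16 {s5} := x.2
  obtain ⟨P, hP⟩ : ∃ P : (↥F16)[X], Polynomial.aeval g16 P = x := by
    have h := IntermediateField.adjoin_simple_toSubalgebra_of_isAlgebraic hsint.isAlgebraic
    have hz' : (x:ℂ) ∈ ((↥F16)⟮s5⟯ : IntermediateField ↥F16 ℂ).toSubalgebra := hxmem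
    rw [h, Algebra.adjoin_singleton_eq_range_aeval] at hz'
    obtain ⟨P, hP⟩ := hz'
    have hP' : Polynomial.aeval s5 P = (x:ℂ) := hP
    refine ⟨P, Subtype.ext ?_⟩
    rw [← hP']
    exact (Polynomial.aeval_algHom_apply K16.val g16 P).symm
  set d : (↥F16)[X] := X ^ 2 - C (5 : ↥F16) with hd
  have hdmonic : d.Monic := Polynomial.monic_X_pow_sub_C _ (by norm_num)
  set R : (↥F16)[X] := P %ₘ d with hR
  have hdegR : R.degree ≤ 1 := by
    have h1 := Polynomial.degree_modByMonic_lt P hdmonic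
    have h2 : d.degree = 2 := by
      rw [hd]
      exact Polynomial.degree_X_pow_sub_C (by norm_num) _
    rw [h2] at h1
    exact Order.le_of_lt_succ (by exact_mod_cast h1)
  have hRform := Polynomial.eq_X_add_C_of_degree_le_one hdegR
  set a : ↥F16 := R.coeff 0 with ha
  set b : ↥F16 := R.coeff 1 with hb
  -- evaluation of x under each embedding
  have key : ∀ σ : ↥K16 →ₐ[↥F16] ℂ, ∀ y : ℂ,
      σ g16 = y → y ^ 2 = 5 →
      σ x = (a : ℂ) + (b : ℂ) * y := by
    intro σ y hy hy2
    rw [← hP]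
    have hcomm := Polynomial.aeval_algHom_apply σ g16 P
    rw [← hcomm, hy]
    conv_lhs => rw [← Polynomial.modByMonic_add_div P d]
    rw [map_add, map_mul]
    have hzero : Polynomial.aeval y d = 0 := by
      rw [hd]
      simp only [map_sub, map_pow, Polynomial.aeval_X, Polynomial.aeval_C]
      rw [show ((algebraMap ↥F16 ℂ) (5 : ↥F16)) = 5 from map_ofNat _ 5, hy2]
      ring
    rw [hzero, zero_mul, add_zero, ← hR]
    conv_lhs => rw [hRform]
    simp only [map_add, map_mul, Polynomial.aeval_X, Polynomial.aeval_C, ← ha, ← hb]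
    rw [IntermediateField.algebraMap_apply, IntermediateField.algebraMap_apply]
    ring
  have hσ1x : σ₁ x = (a : ℂ) + (b : ℂ) * s5 := key σ₁ s5 hgen1 s5_sq
  have hσ2x : σ₂ x = (a : ℂ) + (b : ℂ) * (-s5) := key σ₂ (-s5) hgen2 (by rw [neg_pow, s5_sq]; ring)
  have hζ2 : zeta16 = ((a:ℂ))^2 - 5 * ((b:ℂ))^2 := by
    rw [hζ, hσ1x, hσ2x]
    linear_combination (-((b:ℂ))^2) * s5_sq
  -- now descend to rational polynomials
  obtain ⟨Pa, hPa⟩ := mem_F16 a.2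
  obtain ⟨Pb, hPb⟩ := mem_F16 b.2
  have haev : Polynomial.aeval zeta16 (Pa ^ 2 - 5 * Pb ^ 2 - X) = 0 := by
    simp only [map_sub, map_mul, map_pow, Polynomial.aeval_X, hPa, hPb, map_ofNat]
    linear_combination -hζ2
  have hdvd := minpoly_dvd_of_aeval haev
  obtain ⟨na, A, hna, hA⟩ := exists_denom Pa
  obtain ⟨nb, B, hnb, hB⟩ := exists_denom Pb
  set n : ℤ := na * nb with hn
  have hnne : n ≠ 0 := mul_ne_zero hna hnb
  set A' : ℤ[X] := Polynomial.C nb * A with hA'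
  set B' : ℤ[X] := Polynomial.C na * B with hB'
  set G : ℤ[X] := A' ^ 2 - 5 * B' ^ 2 - Polynomial.C (n ^ 2) * X with hG
  have hmapG : G.map φQ = Polynomial.C (((n:ℤ):ℚ) ^ 2) * (Pa ^ 2 - 5 * Pb ^ 2 - X) := by
    rw [hG]
    simp only [Polynomial.map_sub, Polynomial.map_mul, Polynomial.map_pow, Polynomial.map_C,
      Polynomial.map_X, Polynomial.map_ofNat, hA', hB']
    rw [hA, hB]
    rw [show φQ (n ^ 2) = ((na:ℤ):ℚ) ^ 2 * ((nb:ℤ):ℚ) ^ 2 from by rw [eq_intCast, hn]; push_cast; ring]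
    rw [eq_intCast φQ nb, eq_intCast φQ na]
    rw [show Polynomial.C (((n:ℤ):ℚ) ^ 2) = Polynomial.C ((na:ℤ):ℚ) ^ 2 * Polynomial.C ((nb:ℤ):ℚ) ^ 2
      from by rw [hn]; push_cast [map_mul, map_pow]; ring]
    rw [map_mul, map_pow, map_pow]
    ring
  have hdvd2 : (X ^ 8 + 1 : ℚ[X]) ∣ G.map φQ := by
    rw [hmapG]
    exact Dvd.dvd.mul_left hdvd _
  obtain ⟨Cc, hCc⟩ := int_transfer hdvd2
  refine L2 n hnne A' B' (-Cc) ?_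
  linear_combination -hCc
end

section
/- For Hermitian positive semidefinite matrices A and B of the same size, det(I + A + B) ≤ det(I + A)·det(I + B). -/
open Matrix
open scoped ComplexOrder
open scoped MatrixOrder

section aux

variable {n : ℕ}

/-- For PSD `X`, `1 ≤ det (1 + X)` in `ℂ` (ComplexOrder). -/
lemma aux_one_le_det_one_add (X : Matrix (Fin n) (Fin n) ℂ) (hX : X.PosSemidef) :
    (1 : ℂ) ≤ (1 + X).det := by
  classical
  have hH := hX.isHermitian
  set U : Matrix (Fin n) (Fin n) ℂ := (hH.eigenvectorUnitary : Matrix (Fin n) (Fin n) ℂ) with hUdef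
  have hU : U * star U = 1 := (Matrix.mem_unitaryGroup_iff).mp hH.eigenvectorUnitary.2
  have hspec : X = U * Matrix.diagonal (Complex.ofReal ∘ hH.eigenvalues) * star U :=
    hH.spectral_theorem
  have hone : (1 : Matrix (Fin n) (Fin n) ℂ) = U * 1 * star U := by
    rw [mul_one, hU]
  have hsum : 1 + X = U * (1 + Matrix.diagonal (Complex.ofReal ∘ hH.eigenvalues)) * star U := by
    rw [mul_add, add_mul]
    rw [← hone, ← hspec]
  have hdet : (1 + X).det = (1 + Matrix.diagonal (Complex.ofReal ∘ hH.eigenvalues)).det := by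
    rw [hsum, det_mul_right_comm, hU, one_mul]
  rw [hdet]
  have hdiag : (1 : Matrix (Fin n) (Fin n) ℂ) + Matrix.diagonal (Complex.ofReal ∘ hH.eigenvalues)
      = Matrix.diagonal (fun i => (1 : ℂ) + (hH.eigenvalues i : ℂ)) := by
    rw [← Matrix.diagonal_one, Matrix.diagonal_add]
    rfl
  rw [hdiag, det_diagonal]
  have hcast : (∏ i, ((1 : ℂ) + (hH.eigenvalues i : ℂ)))
      = ((∏ i, ((1 : ℝ) + hH.eigenvalues i) : ℝ) : ℂ) := by
    push_cast; rfl
  rw [hcast]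
  have h1 : (1 : ℝ) ≤ ∏ i, ((1 : ℝ) + hH.eigenvalues i) := by
    calc (1 : ℝ) = ∏ _i : Fin n, (1 : ℝ) := by simp
      _ ≤ ∏ i, ((1 : ℝ) + hH.eigenvalues i) :=
        Finset.prod_le_prod (fun i _ => by norm_num)
          (fun i _ => by linarith [hX.eigenvalues_nonneg i])
  exact_mod_cast h1

/-- Monotonicity step: `det (1 + Y) ≤ det (1 + Y + P)` for PSD `Y`, `P`. -/
lemma aux_det_mono (Y P : Matrix (Fin n) (Fin n) ℂ) (hY : Y.PosSemidef) (hP : P.PosSemidef) :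
    (1 + Y).det ≤ (1 + Y + P).det := by
  classical
  have hYpd : (1 + Y).PosDef := Matrix.PosDef.add_posSemidef Matrix.PosDef.one hY
  have hYps : (1 + Y).PosSemidef := hYpd.posSemidef
  set C : Matrix (Fin n) (Fin n) ℂ := CFC.sqrt (1 + Y) with hCdef
  have hC : C.PosSemidef := (CFC.sqrt_nonneg (1 + Y)).posSemidef
  have hC2 : C * C = 1 + Y := CFC.sqrt_mul_sqrt_self (1 + Y) hYps.nonneg
  have hdetC : C.det * C.det = (1 + Y).det := by rw [← det_mul, hC2]
  have hdetCne : C.det ≠ 0 := by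
    intro h
    have := hYpd.det_pos
    rw [← hdetC, h, mul_zero] at this
    exact lt_irrefl _ this
  have hCu : IsUnit C.det := isUnit_iff_ne_zero.mpr hdetCne
  have hCinv : C * C⁻¹ = 1 := mul_nonsing_inv C hCu
  have hCinv' : C⁻¹ * C = 1 := nonsing_inv_mul C hCu
  have hCiH : C⁻¹ᴴ = C⁻¹ := by rw [conjTranspose_nonsing_inv, hC.isHermitian.eq]
  set X : Matrix (Fin n) (Fin n) ℂ := C⁻¹ * P * C⁻¹ with hXdef
  have hXps : X.PosSemidef := by
    have h := hP.mul_mul_conjTranspose_same C⁻¹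
    rwa [hCiH, ← hXdef] at h
  have hconj : C * X * C = P := by
    rw [hXdef]
    have h1 : C * (C⁻¹ * P * C⁻¹) * C = C * C⁻¹ * P * (C⁻¹ * C) := by
      simp only [Matrix.mul_assoc]
    rw [h1, hCinv, hCinv', one_mul, mul_one]
  have hfact : 1 + Y + P = C * (1 + X) * C := by
    rw [mul_add, add_mul, mul_one, hC2, hconj]
  have hdet : (1 + Y + P).det = (1 + Y).det * (1 + X).det := by
    rw [hfact, det_mul, det_mul, ← hdetC]; ring
  rw [hdet]
  have h1 : (1 : ℂ) ≤ (1 + X).det := aux_one_le_det_one_add X hXps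
  have h0 : (0 : ℂ) ≤ (1 + Y).det := hYpd.det_pos.le
  calc (1 + Y).det = (1 + Y).det * 1 := (mul_one _).symm
    _ ≤ (1 + Y).det * (1 + X).det := mul_le_mul_of_nonneg_left h1 h0

/-- For Hermitian PSD matrices `A`, `B`: `det(I+A+B) ≤ det(I+A)·det(I+B)`. -/
theorem stmt11 (n : ℕ) (A B : Matrix (Fin n) (Fin n) ℂ)
    (hA : A.PosSemidef) (hB : B.PosSemidef) :
    (1 + A + B).det.re ≤ (1 + A).det.re * (1 + B).det.re := by
  classical
  have hApd : (1 + A).PosDef := Matrix.PosDef.add_posSemidef Matrix.PosDef.one hA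
  have hAps : (1 + A).PosSemidef := hApd.posSemidef
  set C : Matrix (Fin n) (Fin n) ℂ := CFC.sqrt (1 + A) with hCdef
  have hC : C.PosSemidef := (CFC.sqrt_nonneg (1 + A)).posSemidef
  have hC2 : C * C = 1 + A := CFC.sqrt_mul_sqrt_self (1 + A) hAps.nonneg
  have hdetC : C.det * C.det = (1 + A).det := by rw [← det_mul, hC2]
  have hdetCne : C.det ≠ 0 := by
    intro h
    have := hApd.det_pos
    rw [← hdetC, h, mul_zero] at this
    exact lt_irrefl _ this
  have hCu : IsUnit C.det := isUnit_iff_ne_zero.mpr hdetCne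
  have hCinv : C * C⁻¹ = 1 := mul_nonsing_inv C hCu
  have hCinv' : C⁻¹ * C = 1 := nonsing_inv_mul C hCu
  have hCiH : C⁻¹ᴴ = C⁻¹ := by rw [conjTranspose_nonsing_inv, hC.isHermitian.eq]
  set S : Matrix (Fin n) (Fin n) ℂ := CFC.sqrt B with hSdef
  have hS : S.PosSemidef := (CFC.sqrt_nonneg B).posSemidef
  have hS2 : S * S = B := CFC.sqrt_mul_sqrt_self B hB.nonneg
  have hSH : Sᴴ = S := hS.isHermitian.eq
  -- X := C⁻¹ B C⁻¹, factorization det(1+A+B) = det(1+A) det(1+X)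
  set X : Matrix (Fin n) (Fin n) ℂ := C⁻¹ * B * C⁻¹ with hXdef
  have hconj : C * X * C = B := by
    rw [hXdef]
    have h1 : C * (C⁻¹ * B * C⁻¹) * C = C * C⁻¹ * B * (C⁻¹ * C) := by
      simp only [Matrix.mul_assoc]
    rw [h1, hCinv, hCinv', one_mul, mul_one]
  have hfact : 1 + A + B = C * (1 + X) * C := by
    rw [mul_add, add_mul, mul_one, hC2, hconj]
  have hdet1 : (1 + A + B).det = (1 + A).det * (1 + X).det := by
    rw [hfact, det_mul, det_mul, ← hdetC]; ring
  -- det(1+X) = det(1+Y) with Y := (S C⁻¹)(C⁻¹ S), via Weinstein–Aronszajn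
  set Y : Matrix (Fin n) (Fin n) ℂ := (S * C⁻¹) * (C⁻¹ * S) with hYdef
  have hXY : (1 + X).det = (1 + Y).det := by
    have hXalt : X = (C⁻¹ * S) * (S * C⁻¹) := by
      rw [hXdef, ← hS2]; noncomm_ring
    rw [hXalt, hYdef]
    exact Matrix.det_one_add_mul_comm _ _
  have hYps : Y.PosSemidef := by
    have h := Matrix.posSemidef_self_mul_conjTranspose (S * C⁻¹)
    rwa [conjTranspose_mul, hCiH, hSH, ← hYdef] at h
  -- P := (S C⁻¹) A (C⁻¹ S) is PSD and 1 + Y + P = 1 + B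
  set P : Matrix (Fin n) (Fin n) ℂ := (S * C⁻¹) * A * (C⁻¹ * S) with hPdef
  have hPps : P.PosSemidef := by
    have h := hA.mul_mul_conjTranspose_same (S * C⁻¹)
    rwa [conjTranspose_mul, hCiH, hSH, ← hPdef] at h
  have hYP : 1 + Y + P = 1 + B := by
    have key : Y + P = B := by
      rw [hYdef, hPdef, ← hS2]
      have h2 : S * C⁻¹ * (C⁻¹ * S) + S * C⁻¹ * A * (C⁻¹ * S)
          = S * (C⁻¹ * (1 + A) * C⁻¹) * S := by
        noncomm_ring
      rw [h2, ← hC2]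
      have h3 : S * (C⁻¹ * (C * C) * C⁻¹) * S = S * ((C⁻¹ * C) * (C * C⁻¹)) * S := by
        simp only [Matrix.mul_assoc]
      rw [h3, hCinv, hCinv', one_mul, mul_one]
    rw [add_assoc, key]
  have hmono : (1 + Y).det ≤ (1 + B).det := by
    have h := aux_det_mono Y P hYps hPps
    rwa [hYP] at h
  -- assemble
  have hdetA0 : (0 : ℂ) ≤ (1 + A).det := hApd.det_pos.le
  have hfinal : (1 + A + B).det ≤ (1 + A).det * (1 + B).det := by
    rw [hdet1, hXY]
    exact mul_le_mul_of_nonneg_left hmono hdetA0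
  have hAim : (1 + A).det.im = 0 := by
    have h := hApd.det_pos.le
    rw [Complex.le_def] at h
    simpa using h.2.symm
  rw [Complex.le_def] at hfinal
  calc (1 + A + B).det.re ≤ ((1 + A).det * (1 + B).det).re := hfinal.1
    _ = (1 + A).det.re * (1 + B).det.re := by
        rw [Complex.mul_re, hAim, zero_mul, sub_zero]

end aux
end

section
/- Let X be a chi-square random variable with 2t degrees of freedom (t a positive integer) and define its exponential order ξ = −log X / log SNR, i.e., X = SNR^{−ξ}. Then for fixed ξ₀ > 0, lim_{SNR→∞} log Prob(X ≤ SNR^{−ξ₀}) / log SNR = −t·ξ₀, and for ξ₀ < 0, Prob(X ≥ SNR^{−ξ₀}) decays faster than any polynomial in SNR. -/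
/-!
For `ε ≤ 1` the factor `exp (-x / 2)` lies between `exp (-1 / 2)` and `1` on `(0, ε]`, so
`P(X ≤ ε)` is squeezed between constant multiples of `ε ^ t`; with `ε = SNR ^ (-ξ₀)` its logarithm
is `-t ξ₀ log SNR + O(1)`. For the upper tail, `x ^ (t - 1) * exp (-x / 2)` is dominated by a
multiple of `exp (-x / 4)`, so `P(X > M) = O(exp (-M / 4))`, and `exp (-SNR ^ (-ξ₀) / 4)` beats
every power of `SNR` when `ξ₀ < 0`.
-/

open Filter MeasureTheory Set Asymptotics Real
open scoped Nat Topology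

lemma tendsto_div_log_atTop_of_sub_isBigO_one {u : ℝ → ℝ} {c : ℝ}
    (h : (fun S => u S - c * log S) =O[atTop] fun _ => (1 : ℝ)) :
    Tendsto (fun S => u S / log S) atTop (𝓝 c) := by
  have hlim : Tendsto (fun S => (u S - c * log S) / log S) atTop (𝓝 0) :=
    (h.trans_isLittleO isLittleO_const_log_atTop).tendsto_div_nhds_zero
  rw [← add_zero c]
  refine (hlim.const_add c).congr' ?_
  filter_upwards [eventually_gt_atTop 1] with S hS
  have := (log_pos hS).ne'
  field_simp
  ring

lemma tendsto_rpow_mul_exp_neg_mul_rpow_atTop_nhds_zero (p : ℝ) {a b : ℝ} (ha : 0 < a)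
    (hb : 0 < b) : Tendsto (fun S => S ^ p * exp (-b * S ^ a)) atTop (𝓝 0) := by
  refine ((tendsto_rpow_mul_exp_neg_mul_atTop_nhds_zero (p / a) b hb).comp
    (tendsto_rpow_atTop ha)).congr' ?_
  filter_upwards [eventually_gt_atTop 0] with S hS
  simp only [Function.comp_apply, ← rpow_mul hS.le, mul_div_cancel₀ p ha.ne']

lemma pow_mul_exp_neg_mul_le (n : ℕ) {c x : ℝ} (hc : 0 < c) (hx : 0 ≤ x) :
    x ^ n * exp (-(c * x)) ≤ n ! / c ^ n := by
  have h := pow_div_factorial_le_exp _ (mul_nonneg hc.le hx) n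
  rw [div_le_iff₀ (by positivity), mul_pow] at h
  rw [le_div_iff₀ (by positivity), exp_neg, ← div_eq_mul_inv, div_mul_eq_mul_div,
    div_le_iff₀ (exp_pos _)]
  linarith

lemma setIntegral_Ioc_zero_pow (n : ℕ) {ε : ℝ} (hε : 0 ≤ ε) :
    ∫ x in Ioc 0 ε, x ^ n = ε ^ (n + 1) / (n + 1) := by
  rw [← intervalIntegral.integral_of_le hε, integral_pow]
  simp

/-- The density of the chi-square distribution with `2 t` degrees of freedom on `x > 0`. -/
noncomputable def chiSqDensity (t : ℕ) (x : ℝ) : ℝ :=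
  x ^ (t - 1) * exp (-x / 2) / (2 ^ t * (t - 1)!)

namespace chiSqDensity

variable {t : ℕ}

lemma nonneg {x : ℝ} (hx : 0 ≤ x) : 0 ≤ chiSqDensity t x := by
  unfold chiSqDensity
  positivity

lemma setIntegral_Ioc_zero_pow_div (ht : 0 < t) {ε : ℝ} (hε : 0 ≤ ε) :
    ∫ x in Ioc 0 ε, x ^ (t - 1) / (2 ^ t * (t - 1)! : ℝ) = ε ^ t / (2 ^ t * t !) := by
  obtain ⟨n, rfl⟩ := Nat.exists_eq_add_one_of_ne_zero ht.ne'
  simp only [Nat.add_sub_cancel, integral_div, setIntegral_Ioc_zero_pow n hε,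
    Nat.factorial_succ, Nat.cast_mul, Nat.cast_succ]
  field_simp

lemma continuous : Continuous (chiSqDensity t) := by
  unfold chiSqDensity
  fun_prop

lemma le_pow_div {x : ℝ} (hx : 0 ≤ x) :
    chiSqDensity t x ≤ x ^ (t - 1) / (2 ^ t * (t - 1)! : ℝ) := by
  unfold chiSqDensity
  gcongr
  exact mul_le_of_le_one_right (by positivity) (exp_le_one_iff.2 (by linarith))

lemma exp_neg_half_mul_pow_div_le {x : ℝ} (hx₀ : 0 ≤ x) (hx₁ : x ≤ 1) :
    exp (-1 / 2) * (x ^ (t - 1) / (2 ^ t * (t - 1)! : ℝ)) ≤ chiSqDensity t x := by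
  unfold chiSqDensity
  rw [← mul_div_assoc, mul_comm (exp _)]
  gcongr

lemma setIntegral_Ioc_zero_le (ht : 0 < t) {ε : ℝ} (hε : 0 ≤ ε) :
    ∫ x in Ioc 0 ε, chiSqDensity t x ≤ ε ^ t / (2 ^ t * t !) := by
  rw [← setIntegral_Ioc_zero_pow_div ht hε]
  exact setIntegral_mono_on continuous.integrableOn_Ioc
    (by fun_prop : Continuous fun x : ℝ => x ^ (t - 1) / (2 ^ t * (t - 1)! : ℝ)).integrableOn_Ioc
    measurableSet_Ioc fun x hx => le_pow_div hx.1.le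

lemma exp_neg_half_mul_le_setIntegral_Ioc_zero (ht : 0 < t) {ε : ℝ} (hε₀ : 0 ≤ ε)
    (hε₁ : ε ≤ 1) : exp (-1 / 2) * (ε ^ t / (2 ^ t * t !)) ≤ ∫ x in Ioc 0 ε, chiSqDensity t x := by
  rw [← setIntegral_Ioc_zero_pow_div ht hε₀, ← integral_const_mul]
  exact setIntegral_mono_on
    (by fun_prop : Continuous fun x : ℝ =>
      exp (-1 / 2) * (x ^ (t - 1) / (2 ^ t * (t - 1)! : ℝ))).integrableOn_Ioc
    continuous.integrableOn_Ioc measurableSet_Ioc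
    fun x hx => exp_neg_half_mul_pow_div_le hx.1.le (hx.2.trans hε₁)

lemma abs_log_setIntegral_Ioc_zero_sub_le (ht : 0 < t) {ε : ℝ} (hε₀ : 0 < ε) (hε₁ : ε ≤ 1) :
    |log (∫ x in Ioc 0 ε, chiSqDensity t x) - t * log ε| ≤ 1 / 2 + log (2 ^ t * t !) := by
  have hlower := exp_neg_half_mul_le_setIntegral_Ioc_zero ht hε₀.le hε₁
  have hpos : 0 < ∫ x in Ioc 0 ε, chiSqDensity t x := lt_of_lt_of_le (by positivity) hlower
  have hlog_upper := log_le_log hpos (setIntegral_Ioc_zero_le ht hε₀.le)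
  have hlog_lower := log_le_log (by positivity) hlower
  have hD : 0 ≤ log (2 ^ t * t ! : ℝ) := log_nonneg (one_le_mul_of_one_le_of_one_le
    (one_le_pow₀ one_le_two) (by exact_mod_cast Nat.one_le_iff_ne_zero.2 (Nat.factorial_ne_zero t)))
  rw [log_mul (exp_pos _).ne' (by positivity), log_exp] at hlog_lower
  rw [log_div (by positivity) (by positivity), log_pow] at hlog_upper hlog_lower
  rw [abs_le]
  constructor <;> linarith

lemma le_mul_exp_neg (ht : 0 < t) {x : ℝ} (hx : 0 ≤ x) :
    chiSqDensity t x ≤ 2 ^ t / 4 * exp (-4⁻¹ * x) := by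
  obtain ⟨n, rfl⟩ := Nat.exists_eq_add_one_of_ne_zero ht.ne'
  have hsplit : exp (-x / 2) = exp (-(4⁻¹ * x)) * exp (-4⁻¹ * x) := by
    rw [← exp_add]
    ring_nf
  have hbound := pow_mul_exp_neg_mul_le n (by norm_num : (0 : ℝ) < 4⁻¹) hx
  unfold chiSqDensity
  rw [Nat.add_sub_cancel, hsplit, ← mul_assoc, div_le_iff₀ (by positivity)]
  calc x ^ n * exp (-(4⁻¹ * x)) * exp (-4⁻¹ * x)
      ≤ n ! / 4⁻¹ ^ n * exp (-4⁻¹ * x) := by gcongr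
    _ = 2 ^ (n + 1) / 4 * exp (-4⁻¹ * x) * (2 ^ (n + 1) * n !) := by
      rw [show (4 : ℝ) = 2 ^ 2 by norm_num, inv_pow, ← pow_mul]
      field_simp
      ring

lemma setIntegral_Ioi_le (ht : 0 < t) {M : ℝ} (hM : 0 ≤ M) :
    ∫ x in Ioi M, chiSqDensity t x ≤ 2 ^ t * exp (-4⁻¹ * M) := by
  have hbound : ∀ x ∈ Ioi M, chiSqDensity t x ≤ 2 ^ t / 4 * exp (-4⁻¹ * x) :=
    fun x hx => le_mul_exp_neg ht (hM.trans hx.le)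
  have hdom : IntegrableOn (fun x => 2 ^ t / 4 * exp (-4⁻¹ * x)) (Ioi M) :=
    (integrableOn_exp_mul_Ioi (by norm_num) M).const_mul _
  have hint : IntegrableOn (chiSqDensity t) (Ioi M) := by
    refine hdom.mono' continuous.aestronglyMeasurable.restrict ?_
    filter_upwards [ae_restrict_mem measurableSet_Ioi] with x hx
    rw [norm_of_nonneg (nonneg (hM.trans hx.le))]
    exact hbound x hx
  calc ∫ x in Ioi M, chiSqDensity t x
      ≤ ∫ x in Ioi M, 2 ^ t / 4 * exp (-4⁻¹ * x) :=
        setIntegral_mono_on hint hdom measurableSet_Ioi hbound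
    _ = 2 ^ t * exp (-4⁻¹ * M) := by
      rw [integral_const_mul, integral_exp_mul_Ioi (by norm_num)]
      field_simp

end chiSqDensity

/-- Exponential order of a chi-square variable with `2t` degrees of freedom
(density `x^{t−1}e^{−x/2}/(2^t (t−1)!)`): for `ξ₀ > 0`,
`log P(X ≤ SNR^{−ξ₀}) / log SNR → −t·ξ₀`; for `ξ₀ < 0`, `P(X ≥ SNR^{−ξ₀})`
decays faster than any polynomial in `SNR`. -/
theorem stmt17 (t : ℕ) (ht : 0 < t) (ξ₀ : ℝ) :
    (0 < ξ₀ →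
      Tendsto (fun SNR : ℝ =>
          Real.log (∫ x in Set.Ioc (0 : ℝ) (SNR ^ (-ξ₀)),
              x ^ (t - 1) * Real.exp (-x / 2)
                / (2 ^ t * (Nat.factorial (t - 1)))) / Real.log SNR)
        atTop (nhds (-(t * ξ₀))))
    ∧ (ξ₀ < 0 → ∀ p : ℝ,
      Tendsto (fun SNR : ℝ =>
          (∫ x in Set.Ioi (SNR ^ (-ξ₀)),
              x ^ (t - 1) * Real.exp (-x / 2)
                / (2 ^ t * (Nat.factorial (t - 1)))) * SNR ^ p)
        atTop (nhds 0)) := by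
  constructor
  · intro hξ₀
    refine tendsto_div_log_atTop_of_sub_isBigO_one (IsBigO.of_bound (1 / 2 + log (2 ^ t * t !)) ?_)
    filter_upwards [eventually_ge_atTop 1] with S hS
    have hbound := chiSqDensity.abs_log_setIntegral_Ioc_zero_sub_le ht
      (rpow_pos_of_pos (by linarith) (-ξ₀)) (rpow_le_one_of_one_le_of_nonpos hS (by linarith))
    rw [log_rpow (by linarith), ← mul_assoc, mul_neg] at hbound
    rwa [norm_one, mul_one, norm_eq_abs]
  · intro hξ₀ p
    have hdecay := (tendsto_rpow_mul_exp_neg_mul_rpow_atTop_nhds_zero p (neg_pos.2 hξ₀)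
      (by norm_num : (0 : ℝ) < 4⁻¹)).const_mul (2 ^ t)
    rw [mul_zero] at hdecay
    refine tendsto_of_tendsto_of_tendsto_of_le_of_le' tendsto_const_nhds hdecay ?_ ?_
    all_goals filter_upwards [eventually_gt_atTop 0] with S hS
    · exact mul_nonneg (setIntegral_nonneg measurableSet_Ioi fun x hx =>
        chiSqDensity.nonneg ((rpow_pos_of_pos hS _).le.trans hx.le)) (rpow_pos_of_pos hS p).le
    · exact (mul_le_mul_of_nonneg_right (chiSqDensity.setIntegral_Ioi_le ht
        (rpow_pos_of_pos hS _).le) (rpow_pos_of_pos hS p).le).trans_eq (by ring)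
end
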